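/- arXiv:0705.1702 — 3 statements merged into one kernel-verified Lean document; each statement's English description precedes it below -/
import Mathlib

section
/- Let P and R be idempotent bounded operators on a Hilbert space H, and suppose there exists a bounded operator U with T U = I − K₁ and U T = I − K₂, where T = R P + (I − R)(I − P) and K₁, K₂ are compact. Then the restriction R : ran(P) → ran(R) is a Fredholm operator. -/
section AuxFredholm
open Metric Set

variable {E : Type*} [NormedAddCommGroup E] [InnerProductSpace ℂ E] [CompleteSpace E]

lemma lemA (K : E →L[ℂ] E) (hK : IsCompactOperator ⇑K) (V : Submodule ℂ E)
    (hVc : IsClosed (V : Set E)) (hV : ∀ y ∈ V, ‖y‖ ≤ ‖K y‖) :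
    FiniteDimensional ℂ V := by
  haveI : CompleteSpace V := hVc.completeSpace_coe
  set L : V →L[ℂ] E := K.comp V.subtypeL with hL
  have hanti : AntilipschitzWith 1 ⇑L := by
    refine AntilipschitzWith.of_le_mul_dist fun x y => ?_
    simp only [dist_eq_norm, NNReal.coe_one, one_mul]
    have hxy : ((x : E) - y) ∈ V := V.sub_mem x.2 y.2
    have := hV _ hxy
    rw [map_sub] at this
    simpa [Submodule.coe_sub, hL] using this
  have hui : IsUniformInducing ⇑L := hanti.isUniformInducing L.uniformContinuous
  have htb : TotallyBounded (closedBall (0 : V) 1) := by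
    refine (totallyBounded_image_iff hui).1 ?_
    obtain ⟨C, hC, hCs⟩ := hK.image_closedBall_subset_compact 1
    refine hC.totallyBounded.subset ?_
    rintro - ⟨x, hx, rfl⟩
    refine hCs ⟨(x : E), ?_, rfl⟩
    simpa [Metric.mem_closedBall, dist_eq_norm] using mem_closedBall_zero_iff.1 hx
  have hcomp : IsCompact (closedBall (0 : V) 1) :=
    isCompact_iff_totallyBounded_isComplete.2 ⟨htb, Metric.isClosed_closedBall.isComplete⟩
  exact FiniteDimensional.of_isCompact_closedBall₀ ℂ one_pos hcomp

lemma kerfd (K : E →L[ℂ] E) (hK : IsCompactOperator ⇑K) :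
    FiniteDimensional ℂ (LinearMap.ker ((1 - K : E →L[ℂ] E) : E →ₗ[ℂ] E)) := by
  refine lemA K hK _ ?_ ?_
  · exact ContinuousLinearMap.isClosed_ker (1 - K : E →L[ℂ] E)
  · intro y hy
    rw [LinearMap.mem_ker] at hy
    have h : y = K y := by
      have h2 : y - K y = 0 := by
        simpa [ContinuousLinearMap.sub_apply] using hy
      exact sub_eq_zero.1 h2
    rw [← h]


open Filter Topology in
lemma rangeClosed (K : E →L[ℂ] E) (hK : IsCompactOperator ⇑K) :
    IsClosed ((LinearMap.range ((1 - K : E →L[ℂ] E) : E →ₗ[ℂ] E) : Submodule ℂ E) : Set E) := by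
  set A : E →L[ℂ] E := 1 - K with hA
  set N : Submodule ℂ E := LinearMap.ker (A : E →ₗ[ℂ] E) with hN
  haveI : FiniteDimensional ℂ N := kerfd K hK
  haveI : CompleteSpace N := FiniteDimensional.complete ℂ N
  have hcompl : IsCompl N Nᗮ := Submodule.isCompl_orthogonal_of_hasOrthogonalProjection
  -- bounded below on Nᗮ
  have hbdd : ∃ c > (0:ℝ), ∀ x ∈ Nᗮ, c * ‖x‖ ≤ ‖A x‖ := by
    by_contra hcon
    push_neg at hcon
    have key : ∀ n : ℕ, ∃ x ∈ Nᗮ, ‖A x‖ < (1 / (n + 1 : ℝ)) * ‖x‖ := by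
      intro n
      obtain ⟨x, hx, hlt⟩ := hcon (1 / (n + 1 : ℝ)) (by positivity)
      exact ⟨x, hx, hlt⟩
    choose x hxmem hxlt using key
    have hxne : ∀ n, ‖x n‖ ≠ 0 := by
      intro n h0
      have := hxlt n
      rw [h0, mul_zero] at this
      exact absurd this (not_lt.2 (norm_nonneg _))
    set u : ℕ → E := fun n => (‖x n‖)⁻¹ • x n with hu
    have hunorm : ∀ n, ‖u n‖ = 1 := by
      intro n
      rw [hu]
      simp only [norm_smul, norm_inv, norm_norm]
      field_simp [hxne n]
    have humem : ∀ n, u n ∈ Nᗮ := fun n => Nᗮ.smul_mem _ (hxmem n)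
    have hAu : ∀ n, ‖A (u n)‖ < 1 / (n + 1 : ℝ) := by
      intro n
      rw [hu]
      simp only [A.map_smul_of_tower, norm_smul, norm_inv, norm_norm]
      have := hxlt n
      have hpos : (0:ℝ) < ‖x n‖ := lt_of_le_of_ne (norm_nonneg _) (Ne.symm (hxne n))
      rw [inv_mul_lt_iff₀ hpos]
      calc ‖A (x n)‖ < (1 / (n + 1 : ℝ)) * ‖x n‖ := this
        _ = ‖x n‖ * (1 / (n + 1 : ℝ)) := by ring
    have hAu0 : Tendsto (fun n => A (u n)) atTop (𝓝 0) := by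
      rw [tendsto_iff_norm_sub_tendsto_zero]
      simp only [sub_zero]
      refine squeeze_zero (fun n => norm_nonneg _) (fun n => le_of_lt (hAu n)) ?_
      exact tendsto_one_div_add_atTop_nhds_zero_nat
    obtain ⟨C, hC, hCs⟩ := hK.image_closedBall_subset_compact 1
    have hKmem : ∀ n, K (u n) ∈ C := by
      intro n
      exact hCs ⟨u n, by simp [mem_closedBall_zero_iff, hunorm n], rfl⟩
    obtain ⟨y, _, φ, hφ, hlim⟩ := hC.tendsto_subseq hKmem
    have hulim : Tendsto (fun n => u (φ n)) atTop (𝓝 y) := by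
      have h1 : Tendsto (fun n => A (u (φ n)) + K (u (φ n))) atTop (𝓝 (0 + y)) :=
        ((hAu0.comp hφ.tendsto_atTop).add hlim)
      rw [zero_add] at h1
      convert h1 using 2 with n
      simp [hA, ContinuousLinearMap.sub_apply]
    have hynorm : ‖y‖ = 1 := by
      have := (continuous_norm.tendsto y).comp hulim
      have h2 : Tendsto (fun n => ‖u (φ n)‖) atTop (𝓝 1) := by
        simpa [hunorm] using tendsto_const_nhds (α := ℝ) (x := (1:ℝ))
      exact tendsto_nhds_unique ((continuous_norm.tendsto y).comp hulim) h2
    have hymem : y ∈ Nᗮ :=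
      N.isClosed_orthogonal.mem_of_tendsto hulim (Eventually.of_forall fun n => humem (φ n))
    have hyker : y ∈ N := by
      rw [hN, LinearMap.mem_ker]
      have h3 : Tendsto (fun n => A (u (φ n))) atTop (𝓝 (A y)) :=
        (A.continuous.tendsto y).comp hulim
      exact tendsto_nhds_unique h3 (hAu0.comp hφ.tendsto_atTop)
    have : y = 0 := by
      have := hcompl.disjoint.le_bot ⟨hyker, hymem⟩
      simpa using this
    rw [this] at hynorm
    simp at hynorm
  obtain ⟨c, hc, hbd⟩ := hbdd
  haveI : CompleteSpace (Nᗮ : Submodule ℂ E) := N.isClosed_orthogonal.completeSpace_coe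
  set B : (Nᗮ : Submodule ℂ E) →L[ℂ] E := A.comp (Nᗮ : Submodule ℂ E).subtypeL with hB
  have hanti : AntilipschitzWith (⟨c, le_of_lt hc⟩ : NNReal)⁻¹ ⇑B := by
    refine AntilipschitzWith.of_le_mul_dist fun v w => ?_
    simp only [dist_eq_norm]
    have hvw : ((v : E) - w) ∈ Nᗮ := Nᗮ.sub_mem v.2 w.2
    have h4 := hbd _ hvw
    have h5 : ‖B v - B w‖ = ‖A ((v:E) - (w:E))‖ := by
      rw [← map_sub]; rfl
    have h6 : ‖(v : (Nᗮ : Submodule ℂ E)) - w‖ = ‖(v:E) - (w:E)‖ := rfl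
    rw [h5, h6]
    have : (((⟨c, le_of_lt hc⟩ : NNReal)⁻¹ : NNReal) : ℝ) = c⁻¹ := rfl
    rw [this, ← div_eq_inv_mul, le_div_iff₀ hc, mul_comm]
    exact h4
  have hclosed : IsClosed (Set.range ⇑B) :=
    hanti.isClosed_range B.uniformContinuous
  have hrange : (LinearMap.range (A : E →ₗ[ℂ] E) : Set E) = Set.range ⇑B := by
    ext z
    constructor
    · rintro ⟨w, rfl⟩
      obtain ⟨n, hn, m, hm, hnm⟩ := Submodule.mem_sup.1
        (by rw [hcompl.sup_eq_top]; exact Submodule.mem_top : w ∈ N ⊔ Nᗮ)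
      refine ⟨⟨m, hm⟩, ?_⟩
      have hAn : A n = 0 := LinearMap.mem_ker.1 hn
      have : A w = A n + A m := by rw [← map_add, hnm]
      simp [hB, this, hAn]
    · rintro ⟨v, rfl⟩
      exact ⟨(v : E), rfl⟩
  rw [hrange]
  exact hclosed

lemma cokerfd (K : E →L[ℂ] E) (hK : IsCompactOperator ⇑K) :
    FiniteDimensional ℂ (E ⧸ (LinearMap.range ((1 - K : E →L[ℂ] E) : E →ₗ[ℂ] E) : Submodule ℂ E)) := by
  set A : E →L[ℂ] E := 1 - K with hA
  set M : Submodule ℂ E := LinearMap.range (A : E →ₗ[ℂ] E) with hM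
  have hMc : IsClosed (M : Set E) := rangeClosed K hK
  haveI : CompleteSpace M := hMc.completeSpace_coe
  have hcompl : IsCompl M Mᗮ := Submodule.isCompl_orthogonal_of_hasOrthogonalProjection
  -- Mᗮ ≤ ker (1 - adjoint K)
  set Kd : E →L[ℂ] E := ContinuousLinearMap.adjoint K with hKd
  haveI hfd : FiniteDimensional ℂ (LinearMap.ker ((1 - Kd : E →L[ℂ] E) : E →ₗ[ℂ] E)) := by
    refine lemA K hK _ (ContinuousLinearMap.isClosed_ker (1 - Kd : E →L[ℂ] E)) ?_
    intro y hy
    have hyK : y = Kd y := by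
      have h2 : y - Kd y = 0 := by
        simpa [ContinuousLinearMap.sub_apply] using LinearMap.mem_ker.1 hy
      exact sub_eq_zero.1 h2
    rcases eq_or_ne ‖y‖ 0 with h0 | h0
    · rw [h0]; exact norm_nonneg _
    have hpos : (0:ℝ) < ‖y‖ := lt_of_le_of_ne (norm_nonneg _) (Ne.symm h0)
    have hsq : ‖y‖ ^ 2 ≤ ‖y‖ * ‖K y‖ := by
      have h3 : (inner ℂ y y : ℂ) = inner ℂ y (K y) := by
        calc (inner ℂ y y : ℂ) = inner ℂ (Kd y) y := by rw [← hyK]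
          _ = inner ℂ y (K y) := ContinuousLinearMap.adjoint_inner_left K y y
      calc ‖y‖ ^ 2 = RCLike.re (inner ℂ y y : ℂ) := by
            rw [← norm_sq_eq_re_inner]
        _ ≤ ‖(inner ℂ y (K y) : ℂ)‖ := by
            rw [h3]; exact RCLike.re_le_norm _
        _ ≤ ‖y‖ * ‖K y‖ := norm_inner_le_norm _ _
    nlinarith
  have hle : Mᗮ ≤ LinearMap.ker ((1 - Kd : E →L[ℂ] E) : E →ₗ[ℂ] E) := by
    intro y hy
    rw [LinearMap.mem_ker]
    have hinner : ∀ x : E, (inner ℂ ((1 - Kd) y) x : ℂ) = 0 := by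
      intro x
      have h1 : (inner ℂ (A x) y : ℂ) = 0 := (Submodule.mem_orthogonal M y).1 hy _ ⟨x, rfl⟩
      have h2 : (inner ℂ ((1 - Kd) y) x : ℂ) = inner ℂ y (A x) := by
        simp only [ContinuousLinearMap.sub_apply, ContinuousLinearMap.one_apply, hA,
          inner_sub_left, inner_sub_right, hKd, ContinuousLinearMap.adjoint_inner_left]
      rw [h2, ← inner_conj_symm, h1, map_zero]
    have := hinner ((1 - Kd) y)
    exact inner_self_eq_zero.1 this
  haveI : FiniteDimensional ℂ Mᗮ := Submodule.finiteDimensional_of_le hle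
  exact (Submodule.quotientEquivOfIsCompl M Mᗮ hcompl).symm.finiteDimensional

end AuxFredholm



variable {H : Type*} [NormedAddCommGroup H] [NormedSpace ℂ H]

/-- The restriction of `R` to a map `ran(P) → ran(R)`. -/
noncomputable def rres (P R : H →L[ℂ] H) :
    ↥(LinearMap.range (P : H →ₗ[ℂ] H)) →ₗ[ℂ] ↥(LinearMap.range (R : H →ₗ[ℂ] H)) :=
  LinearMap.restrict (R : H →ₗ[ℂ] H) (fun x _ => LinearMap.mem_range_self _ x)

/-- `(P, R)` is a Fredholm pair if `R : ran(P) → ran(R)` has finite dimensional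
kernel and cokernel. -/
def IsFredholmPair (P R : H →L[ℂ] H) : Prop :=
  FiniteDimensional ℂ (LinearMap.ker (rres P R)) ∧
  FiniteDimensional ℂ
    (↥(LinearMap.range (R : H →ₗ[ℂ] H)) ⧸ LinearMap.range (rres P R))

/-- The relative index `Rind(P, R)`: the index of `R : ran(P) → ran(R)`. -/
noncomputable def Rind (P R : H →L[ℂ] H) : ℤ :=
  (Module.finrank ℂ (LinearMap.ker (rres P R)) : ℤ) -
    Module.finrank ℂ
      (↥(LinearMap.range (R : H →ₗ[ℂ] H)) ⧸ LinearMap.range (rres P R))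

/-- if the comparison operator `T = RP + (I−R)(I−P)` of a pair of
idempotents has a parametrix `U` modulo compact errors, then
`R : ran(P) → ran(R)` is Fredholm. -/
theorem fredholm_of_parametrix {H : Type*} [NormedAddCommGroup H]
    [InnerProductSpace ℂ H] [CompleteSpace H]
    (P R T U K1 K2 : H →L[ℂ] H)
    (hP : P.comp P = P) (hR : R.comp R = R)
    (hT : T = R.comp P + (1 - R).comp (1 - P))
    (hK1 : IsCompactOperator ⇑K1) (hK2 : IsCompactOperator ⇑K2)
    (hTU : T.comp U = 1 - K1) (hUT : U.comp T = 1 - K2) :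
    IsFredholmPair P R := by
  have hP' : P * P = P := hP
  have hR' : R * R = R := hR
  have hT' : T = R * P + (1 - R) * (1 - P) := hT
  have hTU' : T * U = 1 - K1 := hTU
  have hUT' : U * T = 1 - K2 := hUT
  have h0 : (1 - P) * P = 0 := by rw [sub_mul, one_mul, hP', sub_self]
  have h1 : R * (1 - R) = 0 := by rw [mul_sub, mul_one, hR', sub_self]
  have hTP : T * P = R * P := by
    rw [hT', add_mul, mul_assoc, mul_assoc, hP', h0, mul_zero, add_zero]
  have hRT : R * T = R * P := by
    rw [hT', mul_add, ← mul_assoc, hR', ← mul_assoc, h1, zero_mul, add_zero]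
  constructor
  · -- kernel
    haveI hker2 : FiniteDimensional ℂ (LinearMap.ker ((1 - K2 : H →L[ℂ] H) : H →ₗ[ℂ] H)) := kerfd K2 hK2
    have hmem : ∀ c : LinearMap.ker (rres P R),
        ((c : ↥(LinearMap.range (P : H →ₗ[ℂ] H))) : H) ∈ LinearMap.ker ((1 - K2 : H →L[ℂ] H) : H →ₗ[ℂ] H) := by
      rintro ⟨⟨v, w, hw⟩, hc⟩
      have hRv : R v = 0 := by
        have := congrArg Subtype.val hc
        simpa [rres, LinearMap.restrict_apply] using this
      have hTv : T v = 0 := by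
        have : T v = (T * P) w := by rw [← hw]; rfl
        rw [this, hTP]
        show R (P w) = 0
        have hw' : P w = v := hw
        rw [hw', hRv]
      rw [LinearMap.mem_ker]
      have : (1 - K2 : H →L[ℂ] H) v = (U * T) v := by rw [hUT']
      refine this.trans ?_
      show U (T v) = 0
      rw [hTv, map_zero]
    let j : LinearMap.ker (rres P R) →ₗ[ℂ] LinearMap.ker ((1 - K2 : H →L[ℂ] H) : H →ₗ[ℂ] H) :=
      LinearMap.codRestrict _
        ((LinearMap.range (P : H →ₗ[ℂ] H)).subtype.comp (LinearMap.ker (rres P R)).subtype) hmem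
    have hj : Function.Injective j := by
      intro a b hab
      have h2 : ((j a : H)) = ((j b : H)) := congrArg Subtype.val hab
      exact Subtype.ext (Subtype.ext h2)
    exact FiniteDimensional.of_injective j hj
  · -- cokernel
    haveI hcq : FiniteDimensional ℂ (H ⧸ (LinearMap.range ((1 - K1 : H →L[ℂ] H) : H →ₗ[ℂ] H) : Submodule ℂ H)) :=
      cokerfd K1 hK1
    set g : H →ₗ[ℂ] (↥(LinearMap.range (R : H →ₗ[ℂ] H)) ⧸ LinearMap.range (rres P R)) :=
      (Submodule.mkQ (LinearMap.range (rres P R))).comp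
        (LinearMap.codRestrict (LinearMap.range (R : H →ₗ[ℂ] H)) (R : H →ₗ[ℂ] H)
          (fun x => LinearMap.mem_range_self _ x)) with hg
    have hgsurj : Function.Surjective g := by
      intro z
      obtain ⟨y, rfl⟩ := Submodule.mkQ_surjective _ z
      obtain ⟨x, hx⟩ := y.2
      refine ⟨x, ?_⟩
      show Submodule.mkQ _ ((LinearMap.codRestrict (LinearMap.range (R : H →ₗ[ℂ] H))
        (R : H →ₗ[ℂ] H) (fun x => LinearMap.mem_range_self _ x)) x)
        = Submodule.mkQ _ y
      exact congrArg _ (Subtype.ext hx)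
    have hle : (LinearMap.range ((1 - K1 : H →L[ℂ] H) : H →ₗ[ℂ] H) : Submodule ℂ H) ≤ LinearMap.ker g := by
      rintro - ⟨x, rfl⟩
      rw [LinearMap.mem_ker]
      have hval : R ((1 - K1 : H →L[ℂ] H) x) = R (P (U x)) := by
        have h2 : R ((1 - K1 : H →L[ℂ] H) x) = (R * (T * U)) x := by rw [hTU']; rfl
        rw [h2, ← mul_assoc, hRT, mul_assoc]
        rfl
      have hmem2 : (LinearMap.codRestrict (LinearMap.range (R : H →ₗ[ℂ] H)) (R : H →ₗ[ℂ] H)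
          (fun x => LinearMap.mem_range_self _ x)) ((1 - K1 : H →L[ℂ] H) x)
          ∈ LinearMap.range (rres P R) := by
        refine ⟨⟨P (U x), LinearMap.mem_range_self _ (U x)⟩, ?_⟩
        apply Subtype.ext
        show R (P (U x)) = R ((1 - K1 : H →L[ℂ] H) x)
        exact hval.symm
      have hg0 : g ((1 - K1 : H →L[ℂ] H) x)
          = Submodule.mkQ _ ((LinearMap.codRestrict (LinearMap.range (R : H →ₗ[ℂ] H))
            (R : H →ₗ[ℂ] H) (fun x => LinearMap.mem_range_self _ x))
            ((1 - K1 : H →L[ℂ] H) x)) := rfl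
      refine hg0.trans ?_
      rw [Submodule.mkQ_apply, Submodule.Quotient.mk_eq_zero]
      exact hmem2
    let f := Submodule.liftQ _ g hle
    have hfsurj : Function.Surjective f := by
      intro z
      obtain ⟨x, hx⟩ := hgsurj z
      exact ⟨Submodule.Quotient.mk x, hx⟩
    exact Module.Finite.of_surjective f hfsurj
end

section
/- Suppose P and R are orthogonal projections on a Hilbert space H with P − R compact. If c : H → H is a unitary satisfying c R c⁻¹ = I − R' and c P c⁻¹ = I − P' for projections P', R' with P' − R' compact, then Rind(P, R) = −Rind(P', R'). -/
variable {H : Type*} [NormedAddCommGroup H] [NormedSpace ℂ H]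

open ContinuousLinearMap
open scoped InnerProductSpace

lemma isClosed_range_of_compact_pseudoinv {X Y : Type*} [NormedAddCommGroup X]
    [InnerProductSpace ℂ X] [NormedAddCommGroup Y] [InnerProductSpace ℂ Y] [CompleteSpace X]
    (T : X →L[ℂ] Y) (S : Y →L[ℂ] X) (K : X →L[ℂ] X) (hK : IsCompactOperator ⇑K)
    (hST : ∀ x, S (T x) = x - K x) :
    IsClosed ((LinearMap.range (T : X →ₗ[ℂ] Y) : Submodule ℂ Y) : Set Y) := by
  set N := LinearMap.ker (T : X →ₗ[ℂ] Y) with hN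
  have hNclosed : IsClosed ((N : Submodule ℂ X) : Set X) := isClosed_ker T
  haveI : CompleteSpace N := hNclosed.completeSpace_coe
  set V := Nᗮ with hV
  have hVclosed : IsClosed ((V : Submodule ℂ X) : Set X) := Submodule.isClosed_orthogonal N
  haveI : CompleteSpace V := hVclosed.completeSpace_coe
  -- T is bounded below on V
  have hb : ∃ C : ℝ, 0 < C ∧ ∀ x ∈ V, ‖x‖ ≤ C * ‖T x‖ := by
    by_contra hcon
    push_neg at hcon
    have hsel : ∀ n : ℕ, ∃ u : X, u ∈ V ∧ ‖u‖ = 1 ∧ ‖T u‖ < 1 / (n + 1) := by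
      intro n
      obtain ⟨x, hxV, hx⟩ := hcon ((n : ℝ) + 1) (by positivity)
      have hx0 : x ≠ 0 := by
        rintro rfl
        simp at hx
      have hxpos : (0:ℝ) < ‖x‖ := norm_pos_iff.mpr hx0
      refine ⟨‖x‖⁻¹ • x, V.smul_mem _ hxV, ?_, ?_⟩
      · rw [norm_smul, norm_inv, norm_norm, inv_mul_cancel₀ hxpos.ne']
      · rw [T.map_smul_of_tower, norm_smul, norm_inv, norm_norm,
          inv_mul_lt_iff₀ hxpos, mul_one_div, lt_div_iff₀ (by positivity)]
        linarith [hx]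
    choose u huV hu1 huT using hsel
    have hTu : Filter.Tendsto (fun n => T (u n)) Filter.atTop (nhds 0) := by
      apply squeeze_zero_norm (fun n => (huT n).le)
      exact tendsto_one_div_add_atTop_nhds_zero_nat
    have hSTu : Filter.Tendsto (fun n => u n - K (u n)) Filter.atTop (nhds 0) := by
      have h2 := (S.continuous.tendsto 0).comp hTu
      simpa [Function.comp_def, hST, map_zero] using h2
    have hK' : IsCompactOperator ⇑(K : X →ₗ[ℂ] X) := hK
    have hcomp := hK'.isCompact_closure_image_closedBall 1
    have hmem : ∀ n, K (u n) ∈ closure ((K : X →ₗ[ℂ] X) '' Metric.closedBall 0 1) := fun n =>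
      subset_closure ⟨u n, by simp [Metric.mem_closedBall, (hu1 n).le], rfl⟩
    obtain ⟨z, -, φ, hφ, hconv⟩ := hcomp.tendsto_subseq hmem
    have hconv' : Filter.Tendsto (fun n => u (φ n)) Filter.atTop (nhds z) := by
      have h3 : Filter.Tendsto (fun n => u (φ n) - K (u (φ n))) Filter.atTop (nhds 0) :=
        hSTu.comp hφ.tendsto_atTop
      have h4 := h3.add hconv
      simpa using h4
    have hzV : z ∈ V := hVclosed.mem_of_tendsto hconv' (Filter.Eventually.of_forall
      fun n => huV (φ n))
    have hz1 : ‖z‖ = 1 := by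
      have h5 : Filter.Tendsto (fun n => ‖u (φ n)‖) Filter.atTop (nhds ‖z‖) :=
        (continuous_norm.tendsto z).comp hconv'
      have h6 : Filter.Tendsto (fun n => ‖u (φ n)‖) Filter.atTop (nhds 1) := by
        simp only [hu1]; exact tendsto_const_nhds
      exact tendsto_nhds_unique h5 h6
    have hzN : z ∈ N := by
      have h7 : Filter.Tendsto (fun n => T (u (φ n))) Filter.atTop (nhds (T z)) :=
        (T.continuous.tendsto z).comp hconv'
      have h8 : Filter.Tendsto (fun n => T (u (φ n))) Filter.atTop (nhds 0) :=
        hTu.comp hφ.tendsto_atTop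
      exact LinearMap.mem_ker.mpr (tendsto_nhds_unique h7 h8)
    have hz0 : z = 0 := by
      have := (Submodule.mem_orthogonal N z).mp hzV z hzN
      simpa [inner_self_eq_zero] using this
    rw [hz0, norm_zero] at hz1
    norm_num at hz1
  obtain ⟨C, hC, hCb⟩ := hb
  -- range T = range of the restriction of T to V, which is antilipschitz hence closed
  have hsplit : IsCompl N V := Submodule.isCompl_orthogonal_of_hasOrthogonalProjection
  have hrange : ((LinearMap.range (T : X →ₗ[ℂ] Y) : Submodule ℂ Y) : Set Y) =
      Set.range ⇑(T.comp V.subtypeL) := by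
    ext y
    constructor
    · rintro ⟨x, rfl⟩
      have hx : x ∈ N ⊔ V := by rw [hsplit.sup_eq_top]; trivial
      obtain ⟨a, ha, b, hb, rfl⟩ := Submodule.mem_sup.mp hx
      exact ⟨⟨b, hb⟩, by simp; exact LinearMap.mem_ker.mp ha⟩
    · rintro ⟨v, rfl⟩
      exact ⟨v, rfl⟩
  rw [hrange]
  have hanti : AntilipschitzWith ⟨C, hC.le⟩ ⇑(T.comp V.subtypeL) := by
    apply (T.comp V.subtypeL).antilipschitz_of_bound
    intro x
    exact hCb x.1 x.2
  exact hanti.isClosed_range (T.comp V.subtypeL).uniformContinuous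

lemma mem_range_idem (A : H →L[ℂ] H) (hA : A.comp A = A) (x : H) :
    x ∈ LinearMap.range (A : H →ₗ[ℂ] H) ↔ A x = x := by
  constructor
  · rintro ⟨y, rfl⟩
    have h := DFunLike.congr_fun hA y
    simpa using h
  · intro h
    exact ⟨x, h⟩

lemma isClosed_range_idem (A : H →L[ℂ] H) (hA : A.comp A = A) :
    IsClosed ((LinearMap.range (A : H →ₗ[ℂ] H) : Submodule ℂ H) : Set H) := by
  have : ((LinearMap.range (A : H →ₗ[ℂ] H) : Submodule ℂ H) : Set H)
      = (fun x => A x - x) ⁻¹' {0} := by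
    ext x
    simp [mem_range_idem A hA x, sub_eq_zero]
  rw [this]
  exact isClosed_singleton.preimage (A.continuous.sub continuous_id)

lemma rind_eq {H : Type*} [NormedAddCommGroup H] [InnerProductSpace ℂ H] [CompleteSpace H]
    (A B : H →L[ℂ] H) (hA : A.comp A = A) (hB : B.comp B = B)
    (hAsa : IsSelfAdjoint A) (hBsa : IsSelfAdjoint B)
    (hAB : IsCompactOperator ⇑(A - B)) :
    Rind A B =
      (Module.finrank ℂ
          ↥(LinearMap.range (A : H →ₗ[ℂ] H) ⊓ LinearMap.ker (B : H →ₗ[ℂ] H)) : ℤ) -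
        Module.finrank ℂ
          ↥(LinearMap.range (B : H →ₗ[ℂ] H) ⊓ LinearMap.ker (A : H →ₗ[ℂ] H)) := by
  have hAin : ∀ u v : H, (⟪A u, v⟫_ℂ) = ⟪u, A v⟫_ℂ := by
    intro u v
    nth_rewrite 1 [← hAsa.adjoint_eq]
    exact ContinuousLinearMap.adjoint_inner_left A v u
  have hBin : ∀ u v : H, (⟪B u, v⟫_ℂ) = ⟪u, B v⟫_ℂ := by
    intro u v
    nth_rewrite 1 [← hBsa.adjoint_eq]
    exact ContinuousLinearMap.adjoint_inner_left B v u
  have hUc := isClosed_range_idem A hA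
  have hWc := isClosed_range_idem B hB
  haveI : CompleteSpace ↥(LinearMap.range (A : H →ₗ[ℂ] H)) := hUc.completeSpace_coe
  haveI : CompleteSpace ↥(LinearMap.range (B : H →ₗ[ℂ] H)) := hWc.completeSpace_coe
  -- kernel equivalence
  let e₁ : ↥(LinearMap.ker (rres A B)) ≃ₗ[ℂ]
      ↥(LinearMap.range (A : H →ₗ[ℂ] H) ⊓ LinearMap.ker (B : H →ₗ[ℂ] H)) :=
    { toFun := fun x => ⟨x.1.1, x.1.2,
        LinearMap.mem_ker.mpr (congrArg Subtype.val (LinearMap.mem_ker.mp x.2))⟩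
      invFun := fun z => ⟨⟨z.1, z.2.1⟩, by
        apply LinearMap.mem_ker.mpr
        apply Subtype.ext
        show B z.1 = 0
        exact LinearMap.mem_ker.mp z.2.2⟩
      left_inv := fun x => rfl
      right_inv := fun z => rfl
      map_add' := fun x y => rfl
      map_smul' := fun m x => rfl }
  -- the restriction as a continuous map, with pseudo-inverse mod compacts
  let Tc : ↥(LinearMap.range (A : H →ₗ[ℂ] H)) →L[ℂ] ↥(LinearMap.range (B : H →ₗ[ℂ] H)) :=
    (B.comp (LinearMap.range (A : H →ₗ[ℂ] H)).subtypeL).codRestrict _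
      (fun x => LinearMap.mem_range_self _ _)
  let Sc : ↥(LinearMap.range (B : H →ₗ[ℂ] H)) →L[ℂ] ↥(LinearMap.range (A : H →ₗ[ℂ] H)) :=
    (A.comp (LinearMap.range (B : H →ₗ[ℂ] H)).subtypeL).codRestrict _
      (fun x => LinearMap.mem_range_self _ _)
  let Kc : ↥(LinearMap.range (A : H →ₗ[ℂ] H)) →L[ℂ] ↥(LinearMap.range (A : H →ₗ[ℂ] H)) :=
    ((A.comp (A - B)).comp (LinearMap.range (A : H →ₗ[ℂ] H)).subtypeL).codRestrict _
      (fun x => LinearMap.mem_range_self _ _)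
  have hSTc : ∀ x, Sc (Tc x) = x - Kc x := by
    intro x
    apply Subtype.ext
    have hx : A x.1 = x.1 := (mem_range_idem A hA x.1).mp x.2
    show A (B x.1) = x.1 - A ((A - B) x.1)
    simp only [ContinuousLinearMap.sub_apply, map_sub, hx]
    abel
  have hKc : IsCompactOperator ⇑Kc := by
    have h1 : IsCompactOperator (⇑A ∘ ⇑(A - B)) := hAB.clm_comp A
    have h2 : IsCompactOperator
        ((⇑A ∘ ⇑(A - B)) ∘ ⇑(LinearMap.range (A : H →ₗ[ℂ] H)).subtypeL) := h1.comp_clm _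
    exact h2.codRestrict (fun x => LinearMap.mem_range_self _ _) hUc
  have hM : LinearMap.range (rres A B) = LinearMap.range (Tc : ↥(LinearMap.range (A : H →ₗ[ℂ] H)) →ₗ[ℂ] ↥(LinearMap.range (B : H →ₗ[ℂ] H))) := by
    ext y
    simp only [LinearMap.mem_range]
    constructor
    · rintro ⟨x, rfl⟩; exact ⟨x, Subtype.ext rfl⟩
    · rintro ⟨x, rfl⟩; exact ⟨x, Subtype.ext rfl⟩
  have hMc : IsClosed ((LinearMap.range (rres A B) :
      Submodule ℂ ↥(LinearMap.range (B : H →ₗ[ℂ] H))) :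
      Set ↥(LinearMap.range (B : H →ₗ[ℂ] H))) := by
    rw [hM]
    exact isClosed_range_of_compact_pseudoinv Tc Sc Kc hKc hSTc
  haveI : CompleteSpace ↥(LinearMap.range (rres A B)) := hMc.completeSpace_coe
  let e₂ := Submodule.quotientEquivOfIsCompl _ _
    (Submodule.isCompl_orthogonal_of_hasOrthogonalProjection (K := LinearMap.range (rres A B)))
  -- identify the orthogonal complement of the range
  have key : ∀ (y : ↥(LinearMap.range (B : H →ₗ[ℂ] H))) (x : H),
      x ∈ LinearMap.range (A : H →ₗ[ℂ] H) → (⟪B x, (y.1 : H)⟫_ℂ) = ⟪x, A y.1⟫_ℂ := by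
    intro y x hx
    have hy : B y.1 = y.1 := (mem_range_idem B hB y.1).mp y.2
    have hx' : A x = x := (mem_range_idem A hA x).mp hx
    calc (⟪B x, (y.1 : H)⟫_ℂ) = ⟪x, B y.1⟫_ℂ := hBin x y.1
      _ = ⟪x, (y.1 : H)⟫_ℂ := by rw [hy]
      _ = ⟪A x, (y.1 : H)⟫_ℂ := by rw [hx']
      _ = ⟪x, A y.1⟫_ℂ := hAin x y.1
  have hperp : ∀ y : ↥(LinearMap.range (B : H →ₗ[ℂ] H)),
      (y ∈ (LinearMap.range (rres A B))ᗮ ↔ A y.1 = 0) := by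
    intro y
    rw [Submodule.mem_orthogonal]
    constructor
    · intro h
      have h0 := h (rres A B ⟨A y.1, LinearMap.mem_range_self _ _⟩)
        (LinearMap.mem_range_self _ _)
      rw [Submodule.coe_inner] at h0
      have h1 : (⟪B (A y.1), (y.1 : H)⟫_ℂ) = 0 := h0
      rw [key y (A y.1) (LinearMap.mem_range_self _ _)] at h1
      exact inner_self_eq_zero.mp h1
    · intro hA0 u hu
      obtain ⟨x, rfl⟩ := hu
      rw [Submodule.coe_inner]
      have h2 : ((rres A B x : ↥(LinearMap.range (B : H →ₗ[ℂ] H))) : H) = B x.1 := rfl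
      rw [h2, key y x.1 x.2, hA0, inner_zero_right]
  let e₃ : ↥((LinearMap.range (rres A B))ᗮ) ≃ₗ[ℂ]
      ↥(LinearMap.range (B : H →ₗ[ℂ] H) ⊓ LinearMap.ker (A : H →ₗ[ℂ] H)) :=
    { toFun := fun y => ⟨y.1.1, y.1.2, LinearMap.mem_ker.mpr ((hperp y.1).mp y.2)⟩
      invFun := fun z => ⟨⟨z.1, z.2.1⟩, (hperp ⟨z.1, z.2.1⟩).mpr z.2.2⟩
      left_inv := fun y => rfl
      right_inv := fun z => rfl
      map_add' := fun x y => rfl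
      map_smul' := fun m x => rfl }
  unfold Rind
  rw [e₁.finrank_eq, (e₂.trans e₃).finrank_eq]


/-- if a unitary `c` conjugates the orthogonal projections `R, P`
(with compact difference) to `I − R', I − P'` (with `P' − R'` compact), then
`Rind(P, R) = −Rind(P', R')`. -/
theorem rind_conjugate_complement {H : Type*} [NormedAddCommGroup H]
    [InnerProductSpace ℂ H] [CompleteSpace H]
    (P R P' R' c : H →L[ℂ] H)
    (hP : P.comp P = P) (hR : R.comp R = R)
    (hP' : P'.comp P' = P') (hR' : R'.comp R' = R')
    (hPsa : IsSelfAdjoint P) (hRsa : IsSelfAdjoint R)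
    (hP'sa : IsSelfAdjoint P') (hR'sa : IsSelfAdjoint R')
    (hcomp : IsCompactOperator ⇑(P - R)) (hcomp' : IsCompactOperator ⇑(P' - R'))
    (hc1 : c.comp (adjoint c) = 1) (hc2 : (adjoint c).comp c = 1)
    (hconjR : c.comp (R.comp (adjoint c)) = 1 - R')
    (hconjP : c.comp (P.comp (adjoint c)) = 1 - P') :
    Rind P R = -Rind P' R' := by
  rw [rind_eq P R hP hR hPsa hRsa hcomp, rind_eq P' R' hP' hR' hP'sa hR'sa hcomp']
  have hcc : ∀ x, c (adjoint c x) = x := fun x => by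
    have h := DFunLike.congr_fun hc1 x
    simpa using h
  have hcc' : ∀ x, adjoint c (c x) = x := fun x => by
    have h := DFunLike.congr_fun hc2 x
    simpa using h
  let e : H ≃ₗ[ℂ] H := LinearEquiv.ofLinear (c : H →ₗ[ℂ] H)
    ((adjoint c : H →L[ℂ] H) : H →ₗ[ℂ] H)
    (by ext x; exact hcc x) (by ext x; exact hcc' x)
  -- membership characterizations transported through c
  have hswap : ∀ (Q Q' : H →L[ℂ] H), c.comp (Q.comp (adjoint c)) = 1 - Q' →
      ∀ x : H, (Q' x = x ↔ Q (adjoint c x) = 0) ∧ (Q' x = 0 ↔ Q (adjoint c x) = adjoint c x) := by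
    intro Q Q' hconj x
    have hQx : c (Q (adjoint c x)) = x - Q' x := by
      have h := DFunLike.congr_fun hconj x
      simpa [ContinuousLinearMap.sub_apply] using h
    constructor
    · constructor
      · intro h1
        have h2 := hQx
        rw [h1, sub_self] at h2
        have h3 := congrArg (⇑(adjoint c)) h2
        rw [hcc', map_zero] at h3
        exact h3
      · intro h1
        have h2 := hQx
        rw [h1, map_zero] at h2
        exact (sub_eq_zero.mp h2.symm).symm
    · constructor
      · intro h1
        have h2 := hQx
        rw [h1, sub_zero] at h2
        have h3 := congrArg (⇑(adjoint c)) h2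
        rw [hcc'] at h3
        exact h3
      · intro h1
        have h2 := hQx
        rw [h1, hcc] at h2
        have h3 : x - R' x = x → R' x = 0 := fun h => by
          have := sub_eq_self.mp h; exact this
        -- h2 : x = x - Q' x
        have h4 := sub_eq_self.mp h2.symm
        exact h4
  have claim : ∀ (Q Q' S S' : H →L[ℂ] H), Q'.comp Q' = Q' → S.comp S = S →
      c.comp (Q.comp (adjoint c)) = 1 - Q' → c.comp (S.comp (adjoint c)) = 1 - S' →
      LinearMap.range (Q' : H →ₗ[ℂ] H) ⊓ LinearMap.ker (S' : H →ₗ[ℂ] H) =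
        Submodule.map (e : H →ₗ[ℂ] H)
          (LinearMap.ker (Q : H →ₗ[ℂ] H) ⊓ LinearMap.range (S : H →ₗ[ℂ] H)) := by
    intro Q Q' S S' hQ' hS hconjQ hconjS
    have he : ∀ z, (e : H →ₗ[ℂ] H) z = c z := fun z => rfl
    ext x
    rw [Submodule.mem_map]
    constructor
    · intro hx
      rw [Submodule.mem_inf, mem_range_idem Q' hQ', LinearMap.mem_ker] at hx
      refine ⟨adjoint c x, ?_, by rw [he]; exact hcc x⟩
      rw [Submodule.mem_inf, LinearMap.mem_ker, mem_range_idem S hS]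
      exact ⟨((hswap Q Q' hconjQ x).1).mp hx.1, ((hswap S S' hconjS x).2).mp hx.2⟩
    · rintro ⟨y, hy, rfl⟩
      simp only [he]
      rw [Submodule.mem_inf, LinearMap.mem_ker, mem_range_idem S hS] at hy
      have hy' : y = adjoint c (c y) := (hcc' y).symm
      rw [Submodule.mem_inf, mem_range_idem Q' hQ', LinearMap.mem_ker]
      constructor
      · apply ((hswap Q Q' hconjQ (c y)).1).mpr
        rw [hcc']
        exact hy.1
      · apply ((hswap S S' hconjS (c y)).2).mpr
        rw [hcc']
        exact hy.2
  have h1 := claim P P' R R' hP' hR hconjP hconjR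
  have h2 := claim R R' P P' hR' hP hconjR hconjP
  rw [h1, h2, LinearEquiv.finrank_map_eq, LinearEquiv.finrank_map_eq,
    inf_comm (LinearMap.ker (P : H →ₗ[ℂ] H)), inf_comm (LinearMap.ker (R : H →ₗ[ℂ] H))]
  ring
end

section
/- Let P, R be orthogonal projections on a Hilbert space H with P − R compact, and suppose the adjoint relation P* = c (I − P') c⁻¹ and R = c (I − R') c⁻¹ hold for a unitary c and projections P', R' with P' − R' compact. If the kernel of R : ran(P) → ran(R) is isomorphic to a space V and the kernel of R' : ran(P') → ran(R') is isomorphic to a space W, then the cokernel of R : ran(P) → ran(R) is isomorphic to W, hence Rind(P, R) = dim V − dim W. -/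
section Aux

open Set Filter Topology Metric


lemma riesz_closed_range {E F : Type*} [NormedAddCommGroup E] [NormedSpace ℂ E]
    [CompleteSpace E] [NormedAddCommGroup F] [NormedSpace ℂ F]
    (T : E →L[ℂ] F) (K : E →L[ℂ] E) (hK : IsCompactOperator ⇑K)
    (hdom : ∀ x, ‖x - K x‖ ≤ ‖T x‖) :
    IsClosed ((LinearMap.range (T : E →ₗ[ℂ] F)) : Set F) := by
  classical
  set N : Submodule ℂ E := LinearMap.ker (T : E →ₗ[ℂ] F) with hN
  have hfix : ∀ x ∈ N, K x = x := by
    intro x hx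
    have h0 : T x = 0 := hx
    have h1 := hdom x
    rw [h0, norm_zero] at h1
    have h2 : x - K x = 0 := by
      have := le_antisymm h1 (norm_nonneg _)
      simpa [norm_eq_zero] using this
    exact (sub_eq_zero.mp h2).symm
  have hNclosed : IsClosed (N : Set E) := ContinuousLinearMap.isClosed_ker T
  haveI finN : FiniteDimensional ℂ N := by
    have hKN : ∀ v ∈ N, (K : E →ₗ[ℂ] E) v ∈ N := fun v hv => by
      show K v ∈ N; rw [hfix v hv]; exact hv
    have hres : IsCompactOperator ⇑((K : E →ₗ[ℂ] E).restrict hKN) :=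
      IsCompactOperator.restrict (by exact hK) hKN hNclosed
    have hid : ⇑((K : E →ₗ[ℂ] E).restrict hKN) = (id : N → N) := by
      funext x
      exact Subtype.ext (by simpa using hfix x x.2)
    rw [hid] at hres
    have := (isCompactOperator_iff_isCompact_closure_image_closedBall
      (LinearMap.id (R := ℂ) (M := N)) zero_lt_one).mp (by simpa using hres)
    simp only [LinearMap.id_coe, image_id] at this
    rw [IsClosed.closure_eq (Metric.isClosed_closedBall)] at this
    exact FiniteDimensional.of_isCompact_closedBall₀ ℂ zero_lt_one this
  obtain ⟨f, hf⟩ := Submodule.ClosedComplemented.of_finiteDimensional N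
  set M : Submodule ℂ E := LinearMap.ker (f : E →ₗ[ℂ] N) with hM
  have hMclosed : IsClosed (M : Set E) := ContinuousLinearMap.isClosed_ker f
  have hcompl : IsCompl N M := LinearMap.isCompl_of_proj (f := (f : E →ₗ[ℂ] N)) hf
  have hbdd : ∃ c : ℝ, ∀ x ∈ M, ‖x‖ ≤ c * ‖T x‖ := by
    by_contra h
    push_neg at h
    have hseq : ∀ n : ℕ, ∃ y : E, y ∈ M ∧ ‖y‖ = 1 ∧ ‖T y‖ < 1 / (n + 1) := by
      intro n
      obtain ⟨z, hzM, hz⟩ := h ((n : ℝ) + 1)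
      have hz0 : z ≠ 0 := by
        rintro rfl
        simp at hz
      have hnz : (0 : ℝ) < ‖z‖ := norm_pos_iff.mpr hz0
      refine ⟨((‖z‖ : ℂ))⁻¹ • z, M.smul_mem _ hzM, ?_, ?_⟩
      · rw [norm_smul, norm_inv, Complex.norm_real, Real.norm_eq_abs, abs_of_pos hnz,
          inv_mul_cancel₀ hnz.ne']
      · rw [map_smul, norm_smul, norm_inv, Complex.norm_real, Real.norm_eq_abs,
          abs_of_pos hnz]
        have h2 : ‖z‖⁻¹ * ‖T z‖ < ‖z‖⁻¹ * (‖z‖ * (1 / ((n : ℝ) + 1))) := by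
          apply mul_lt_mul_of_pos_left _ (inv_pos.mpr hnz)
          rw [mul_one_div, lt_div_iff₀ (by positivity : (0:ℝ) < (n:ℝ)+1)]
          linarith [hz]
        calc ‖z‖⁻¹ * ‖T z‖ < ‖z‖⁻¹ * (‖z‖ * (1 / ((n : ℝ) + 1))) := h2
          _ = 1 / ((n : ℝ) + 1) := by
              rw [← mul_assoc, inv_mul_cancel₀ hnz.ne', one_mul]
    choose u huM hu1 huT using hseq
    have humem : ∀ n, K (u n) ∈ closure (⇑K '' closedBall 0 1) := fun n =>
      subset_closure ⟨u n, by simp [hu1 n], rfl⟩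
    obtain ⟨y, -, φ, hφ, hy⟩ :=
      (hK.isCompact_closure_image_closedBall (𝕜₁ := ℂ) 1).tendsto_subseq humem
    have hTall : Tendsto (fun n => ‖T (u n)‖) atTop (𝓝 0) :=
      squeeze_zero (fun n => norm_nonneg _) (fun n => (huT n).le)
        tendsto_one_div_add_atTop_nhds_zero_nat
    have hTto : Tendsto (fun n => ‖T (u (φ n))‖) atTop (𝓝 0) :=
      hTall.comp hφ.tendsto_atTop
    have hdiffto : Tendsto (fun n => u (φ n) - K (u (φ n))) atTop (𝓝 0) :=
      squeeze_zero_norm (fun n => hdom (u (φ n))) hTto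
    have hu_tend : Tendsto (fun n => u (φ n)) atTop (𝓝 y) := by
      have := hdiffto.add hy
      rw [zero_add] at this
      simpa using this
    have hyM : y ∈ M := hMclosed.mem_of_tendsto hu_tend
      (Eventually.of_forall (fun n => huM (φ n)))
    have hy1 : ‖y‖ = 1 := by
      have hconst : (fun n => ‖u (φ n)‖) = fun _ => (1 : ℝ) :=
        funext fun n => hu1 (φ n)
      exact tendsto_nhds_unique (hconst ▸ hu_tend.norm) tendsto_const_nhds
    have hTy : T y = 0 := by
      have h1 : Tendsto (fun n => T (u (φ n))) atTop (𝓝 (T y)) :=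
        (T.continuous.tendsto y).comp hu_tend
      have h2 : Tendsto (fun n => T (u (φ n))) atTop (𝓝 0) :=
        tendsto_zero_iff_norm_tendsto_zero.mpr hTto
      exact tendsto_nhds_unique h1 h2
    have hyN : y ∈ N := hTy
    have : y = 0 := (Submodule.mem_bot ℂ).mp (hcompl.disjoint.le_bot ⟨hyN, hyM⟩)
    rw [this, norm_zero] at hy1
    norm_num at hy1
  obtain ⟨c, hc⟩ := hbdd
  set c' : ℝ := max c 0 with hc'
  set g : ↥M →L[ℂ] F := T.comp M.subtypeL with hg
  have hanti : AntilipschitzWith (Real.toNNReal c') ⇑g := by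
    apply AddMonoidHomClass.antilipschitz_of_bound
    intro x
    have h1 : ‖(x : E)‖ ≤ c * ‖T (x : E)‖ := hc x x.2
    have h2 : c * ‖T (x : E)‖ ≤ c' * ‖T (x : E)‖ :=
      mul_le_mul_of_nonneg_right (le_max_left _ _) (norm_nonneg _)
    calc ‖x‖ = ‖(x : E)‖ := rfl
      _ ≤ c' * ‖T (x : E)‖ := h1.trans h2
      _ = Real.toNNReal c' * ‖g x‖ := by
          rw [Real.coe_toNNReal c' (le_max_right _ _)]; rfl
  haveI : CompleteSpace ↥M := hMclosed.completeSpace_coe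
  have hclosedg : IsClosed (Set.range ⇑g) := hanti.isClosed_range g.uniformContinuous
  have hsets : ((LinearMap.range (T : E →ₗ[ℂ] F)) : Set F) = Set.range ⇑g := by
    ext z
    constructor
    · rintro ⟨x, rfl⟩
      have hx : x ∈ N ⊔ M := by rw [hcompl.sup_eq_top]; trivial
      obtain ⟨a, ha, b, hb, rfl⟩ := Submodule.mem_sup.mp hx
      refine ⟨⟨b, hb⟩, ?_⟩
      have hTa : T a = 0 := ha
      show T b = T (a + b)
      rw [map_add, hTa, zero_add]
    · rintro ⟨m, rfl⟩
      exact ⟨m, rfl⟩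
  rw [hsets]
  exact hclosedg

lemma proj_mem_range_iff {H : Type*} [NormedAddCommGroup H] [NormedSpace ℂ H]
    (P : H →L[ℂ] H) (hP : P.comp P = P) (x : H) :
    x ∈ LinearMap.range (P : H →ₗ[ℂ] H) ↔ P x = x := by
  constructor
  · rintro ⟨y, rfl⟩
    have : (P.comp P) y = P y := by rw [hP]
    simpa using this
  · intro h
    exact ⟨x, h⟩

lemma proj_range_closed {H : Type*} [NormedAddCommGroup H] [NormedSpace ℂ H]
    (P : H →L[ℂ] H) (hP : P.comp P = P) :
    IsClosed ((LinearMap.range (P : H →ₗ[ℂ] H)) : Set H) := by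
  have h : ((LinearMap.range (P : H →ₗ[ℂ] H)) : Set H) = {x | P x = x} := by
    ext x
    simpa using proj_mem_range_iff P hP x
  rw [h]
  exact isClosed_eq P.continuous continuous_id

lemma proj_norm_le {H : Type*} [NormedAddCommGroup H] [InnerProductSpace ℂ H]
    [CompleteSpace H] (P : H →L[ℂ] H) (hP : P.comp P = P) (hPsa : IsSelfAdjoint P)
    (y : H) : ‖P y‖ ≤ ‖y‖ := by
  have hadj : ContinuousLinearMap.adjoint P = P := hPsa.adjoint_eq
  have hPP : P (P y) = P y := by
    have : (P.comp P) y = P y := by rw [hP]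
    simpa using this
  have h1 : (inner ℂ (P y) (P y) : ℂ) = inner ℂ y (P y) := by
    calc (inner ℂ (P y) (P y) : ℂ) = inner ℂ ((ContinuousLinearMap.adjoint P) y) (P y) := by
          rw [hadj]
      _ = inner ℂ y (P (P y)) := ContinuousLinearMap.adjoint_inner_left _ _ _
      _ = inner ℂ y (P y) := by rw [hPP]
  have h2 : ‖P y‖ ^ 2 = RCLike.re (inner ℂ (P y) (P y) : ℂ) := by
    rw [inner_self_eq_norm_sq]
  have h3 : RCLike.re (inner ℂ y (P y) : ℂ) ≤ ‖y‖ * ‖P y‖ := by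
    calc RCLike.re (inner ℂ y (P y) : ℂ) ≤ ‖(inner ℂ y (P y) : ℂ)‖ := RCLike.re_le_norm _
      _ ≤ ‖y‖ * ‖P y‖ := norm_inner_le_norm _ _
  have h4 : ‖P y‖ ^ 2 ≤ ‖y‖ * ‖P y‖ := by rw [h2, h1]; exact h3
  rcases eq_or_lt_of_le (norm_nonneg (P y)) with h | h
  · rw [← h]; exact norm_nonneg y
  · nlinarith [h4, h]

end Aux

set_option maxHeartbeats 1000000



variable {H : Type*} [NormedAddCommGroup H] [NormedSpace ℂ H]

open ContinuousLinearMap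

/-- duality identification of the cokernel.  If a unitary `c` implements
`P* = c (I − P') c⁻¹` and `R = c (I − R') c⁻¹` for projections with compact
differences, and the kernels of `R : ran(P) → ran(R)` and `R' : ran(P') → ran(R')`
are isomorphic to finite dimensional spaces `V` and `W` respectively, then the
cokernel of `R : ran(P) → ran(R)` is isomorphic to `W`, and
`Rind(P, R) = dim V − dim W`. -/
theorem cokernel_duality {H : Type*} [NormedAddCommGroup H]
    [InnerProductSpace ℂ H] [CompleteSpace H]
    {V W : Type*} [AddCommGroup V] [Module ℂ V] [FiniteDimensional ℂ V]
    [AddCommGroup W] [Module ℂ W] [FiniteDimensional ℂ W]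
    (P R P' R' c : H →L[ℂ] H)
    (hP : P.comp P = P) (hR : R.comp R = R)
    (hP' : P'.comp P' = P') (hR' : R'.comp R' = R')
    (hPsa : IsSelfAdjoint P) (hRsa : IsSelfAdjoint R)
    (hP'sa : IsSelfAdjoint P') (hR'sa : IsSelfAdjoint R')
    (hcomp : IsCompactOperator ⇑(P - R)) (hcomp' : IsCompactOperator ⇑(P' - R'))
    (hc1 : c.comp (adjoint c) = 1) (hc2 : (adjoint c).comp c = 1)
    (hconjP : adjoint P = c.comp ((1 - P').comp (adjoint c)))
    (hconjR : R = c.comp ((1 - R').comp (adjoint c)))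
    (hV : Nonempty (↥(LinearMap.ker (rres P R)) ≃ₗ[ℂ] V))
    (hW : Nonempty (↥(LinearMap.ker (rres P' R')) ≃ₗ[ℂ] W)) :
    Nonempty
      ((↥(LinearMap.range (R : H →ₗ[ℂ] H)) ⧸ LinearMap.range (rres P R)) ≃ₗ[ℂ] W) ∧
    Rind P R = (Module.finrank ℂ V : ℤ) - Module.finrank ℂ W := by
  classical
  have hEclosed : IsClosed ((LinearMap.range (P : H →ₗ[ℂ] H)) : Set H) :=
    proj_range_closed P hP
  have hFclosed : IsClosed ((LinearMap.range (R : H →ₗ[ℂ] H)) : Set H) :=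
    proj_range_closed R hR
  set E : Submodule ℂ H := LinearMap.range (P : H →ₗ[ℂ] H) with hE
  set Fs : Submodule ℂ H := LinearMap.range (R : H →ₗ[ℂ] H) with hFs
  haveI : CompleteSpace ↥E := hEclosed.completeSpace_coe
  haveI : CompleteSpace ↥Fs := hFclosed.completeSpace_coe
  have hPP : ∀ z, P (P z) = P z := fun z => by
    have : (P.comp P) z = P z := by rw [hP]
    simpa using this
  -- the continuous version of `rres P R`
  set T : ↥E →L[ℂ] ↥Fs :=
    ContinuousLinearMap.codRestrict (R.comp (Submodule.subtypeL E)) Fs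
      (fun x => ⟨(x : H), rfl⟩) with hT
  have hTeq : rres P R = (T : ↥E →ₗ[ℂ] ↥Fs) := rfl
  set K : ↥E →L[ℂ] ↥E :=
    ContinuousLinearMap.codRestrict (P.comp ((P - R).comp (Submodule.subtypeL E))) E
      (fun x => ⟨(P - R) (x : H), rfl⟩) with hK
  have hKc : IsCompactOperator ⇑K := by
    have h1 : IsCompactOperator (⇑(P - R) ∘ ⇑(Submodule.subtypeL E)) :=
      hcomp.comp_clm (Submodule.subtypeL E)
    have h2 : IsCompactOperator (⇑P ∘ (⇑(P - R) ∘ ⇑(Submodule.subtypeL E))) :=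
      h1.clm_comp P
    exact h2.codRestrict (V := E) (fun x => ⟨(P - R) (x : H), rfl⟩) hEclosed
  have hdom : ∀ x : ↥E, ‖x - K x‖ ≤ ‖T x‖ := by
    intro x
    have hx : P (x : H) = (x : H) := (proj_mem_range_iff P hP _).mp x.2
    have hcoe : ((x - K x : ↥E) : H) = P (R (x : H)) := by
      show (x : H) - P ((P - R) (x : H)) = P (R (x : H))
      rw [ContinuousLinearMap.sub_apply, map_sub, hPP, hx]
      abel
    have h1 : ‖x - K x‖ = ‖P (R (x : H))‖ := by
      rw [← hcoe]; rfl
    have h2 : ‖T x‖ = ‖R (x : H)‖ := rfl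
    rw [h1, h2]
    exact proj_norm_le P hP hPsa (R (x : H))
  have hclosedT := riesz_closed_range T K hKc hdom
  have hAclosed : IsClosed ((LinearMap.range (rres P R)) : Set ↥Fs) := by
    rw [hTeq]
    exact hclosedT
  haveI : CompleteSpace ↥(LinearMap.range (rres P R)) := hAclosed.completeSpace_coe
  have hcompl : IsCompl (LinearMap.range (rres P R)) (LinearMap.range (rres P R))ᗮ :=
    Submodule.isCompl_orthogonal_of_hasOrthogonalProjection
  -- inner ℂ product calculations
  have hPinner : ∀ z w : H, (inner ℂ (P z) w : ℂ) = inner ℂ z (P w) := fun z w => by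
    calc (inner ℂ (P z) w : ℂ) = inner ℂ ((adjoint P) z) w := by rw [hPsa.adjoint_eq]
      _ = inner ℂ z (P w) := ContinuousLinearMap.adjoint_inner_left _ _ _
  have hRinner : ∀ z w : H, (inner ℂ (R z) w : ℂ) = inner ℂ z (R w) := fun z w => by
    calc (inner ℂ (R z) w : ℂ) = inner ℂ ((adjoint R) z) w := by rw [hRsa.adjoint_eq]
      _ = inner ℂ z (R w) := ContinuousLinearMap.adjoint_inner_left _ _ _
  -- the orthogonal complement of the range is the kernel of `P : ran R → ran P`
  have horth : (LinearMap.range (rres P R))ᗮ = LinearMap.ker (rres R P) := by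
    ext x
    have hxR : R (x : H) = (x : H) := (proj_mem_range_iff R hR _).mp x.2
    rw [Submodule.mem_orthogonal, LinearMap.mem_ker]
    constructor
    · intro h
      have key : ∀ z : H, (inner ℂ z (P (x : H)) : ℂ) = 0 := by
        intro z
        have hmem : (rres P R) ⟨P z, ⟨z, rfl⟩⟩ ∈ LinearMap.range (rres P R) :=
          LinearMap.mem_range_self _ _
        have h0 := h _ hmem
        rw [Submodule.coe_inner] at h0
        have hcoe : ((rres P R ⟨P z, ⟨z, rfl⟩⟩ : ↥Fs) : H) = R (P z) := rfl
        rw [hcoe] at h0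
        calc (inner ℂ z (P (x : H)) : ℂ) = inner ℂ (P z) (x : H) := (hPinner z (x : H)).symm
          _ = inner ℂ (P z) (R (x : H)) := by rw [hxR]
          _ = inner ℂ (R (P z)) (x : H) := by rw [hRinner (P z) (x : H), hxR]
          _ = 0 := h0
      have hPx : P (x : H) = 0 := inner_self_eq_zero.mp (key (P (x : H)))
      exact Subtype.ext hPx
    · intro h
      have hPx : P (x : H) = 0 := congrArg Subtype.val h
      intro v hv
      obtain ⟨y, rfl⟩ := hv
      rw [Submodule.coe_inner]
      have hy : P (y : H) = (y : H) := (proj_mem_range_iff P hP _).mp y.2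
      have hcoe : ((rres P R y : ↥Fs) : H) = R (y : H) := rfl
      rw [hcoe]
      calc (inner ℂ (R (y : H)) ((x : ↥Fs) : H) : ℂ)
          = inner ℂ (y : H) (R (x : H)) := hRinner _ _
        _ = inner ℂ (y : H) ((x : ↥Fs) : H) := by rw [hxR]
        _ = inner ℂ (P (y : H)) ((x : ↥Fs) : H) := by rw [hy]
        _ = inner ℂ (y : H) (P ((x : ↥Fs) : H)) := hPinner _ _
        _ = 0 := by rw [hPx, inner_zero_right]
  rw [horth] at hcompl
  have e1 : (↥Fs ⧸ LinearMap.range (rres P R)) ≃ₗ[ℂ] ↥(LinearMap.ker (rres R P)) :=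
    Submodule.quotientEquivOfIsCompl _ _ hcompl
  -- duality: kernel of `P : ran R → ran P` is isomorphic to kernel of `R' : ran P' → ran R'`
  have hcu : ∀ z, adjoint c (c z) = z := fun z => by
    have : ((adjoint c).comp c) z = (1 : H →L[ℂ] H) z := by rw [hc2]
    simpa using this
  have huc : ∀ z, c (adjoint c z) = z := fun z => by
    have : (c.comp (adjoint c)) z = (1 : H →L[ℂ] H) z := by rw [hc1]
    simpa using this
  have hPfun : ∀ z, P z = c (adjoint c z - P' (adjoint c z)) := fun z => by
    have h1 : P z = (c.comp ((1 - P').comp (adjoint c))) z := by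
      rw [← hPsa.adjoint_eq, hconjP]
    simpa [ContinuousLinearMap.comp_apply, ContinuousLinearMap.sub_apply] using h1
  have hRfun : ∀ z, R z = c (adjoint c z - R' (adjoint c z)) := fun z => by
    have h1 : R z = (c.comp ((1 - R').comp (adjoint c))) z := by rw [← hconjR]
    simpa [ContinuousLinearMap.comp_apply, ContinuousLinearMap.sub_apply] using h1
  have e2 : ↥(LinearMap.ker (rres R P)) ≃ₗ[ℂ] ↥(LinearMap.ker (rres P' R')) := by
    refine
      { toFun := fun x => ⟨⟨adjoint c ((x : ↥Fs) : H), ?_⟩, ?_⟩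
        map_add' := ?_
        map_smul' := ?_
        invFun := fun y => ⟨⟨c ((y : ↥(LinearMap.range (P' : H →ₗ[ℂ] H))) : H), ?_⟩, ?_⟩
        left_inv := ?_
        right_inv := ?_ }
    · -- membership in ran P'
      have hxP : P ((x : ↥Fs) : H) = 0 := congrArg Subtype.val x.2
      have h0 : c (adjoint c (((x : ↥Fs) : H)) -
          P' (adjoint c (((x : ↥Fs) : H)))) = 0 := by
        rw [← hPfun]; exact hxP
      have h1 : adjoint c (((x : ↥Fs) : H)) -
          P' (adjoint c (((x : ↥Fs) : H))) = 0 := by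
        have := congrArg (adjoint c) h0
        rwa [hcu, map_zero] at this
      exact (proj_mem_range_iff P' hP' _).mpr (sub_eq_zero.mp h1).symm
    · -- membership in ker (rres P' R')
      have hxR : R ((x : ↥Fs) : H) = ((x : ↥Fs) : H) :=
        (proj_mem_range_iff R hR _).mp (x : ↥Fs).2
      apply Subtype.ext
      show R' (adjoint c (((x : ↥Fs) : H))) = 0
      have h0 : c (adjoint c (((x : ↥Fs) : H)) -
          R' (adjoint c (((x : ↥Fs) : H)))) = ((x : ↥Fs) : H) := by
        rw [← hRfun]; exact hxR
      have h1 : adjoint c (((x : ↥Fs) : H)) - R' (adjoint c (((x : ↥Fs) : H))) =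
          adjoint c (((x : ↥Fs) : H)) := by
        have := congrArg (adjoint c) h0
        rwa [hcu] at this
      exact sub_eq_self.mp h1
    · -- additivity
      intro a b
      apply Subtype.ext
      apply Subtype.ext
      exact map_add (adjoint c) _ _
    · -- smul
      intro m a
      apply Subtype.ext
      apply Subtype.ext
      exact map_smul (adjoint c) m _
    · -- c y ∈ ran R
      have hy : P' ((y : ↥(LinearMap.range (P' : H →ₗ[ℂ] H))) : H) =
          ((y : ↥(LinearMap.range (P' : H →ₗ[ℂ] H))) : H) :=
        (proj_mem_range_iff P' hP' _).mp (y : ↥(LinearMap.range (P' : H →ₗ[ℂ] H))).2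
      have hyR : R' ((y : ↥(LinearMap.range (P' : H →ₗ[ℂ] H))) : H) = 0 :=
        congrArg Subtype.val y.2
      refine (proj_mem_range_iff R hR _).mpr ?_
      rw [hRfun, hcu, hyR, sub_zero]
    · -- ⟨c y, _⟩ ∈ ker (rres R P)
      have hy : P' ((y : ↥(LinearMap.range (P' : H →ₗ[ℂ] H))) : H) =
          ((y : ↥(LinearMap.range (P' : H →ₗ[ℂ] H))) : H) :=
        (proj_mem_range_iff P' hP' _).mp (y : ↥(LinearMap.range (P' : H →ₗ[ℂ] H))).2
      apply Subtype.ext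
      show P (c (((y : ↥(LinearMap.range (P' : H →ₗ[ℂ] H))) : H))) = 0
      rw [hPfun, hcu, hy, sub_self, map_zero]
    · -- left inverse
      intro x
      apply Subtype.ext
      apply Subtype.ext
      exact huc _
    · -- right inverse
      intro y
      apply Subtype.ext
      apply Subtype.ext
      exact hcu _
  have ecoker : (↥Fs ⧸ LinearMap.range (rres P R)) ≃ₗ[ℂ] W :=
    (e1.trans e2).trans hW.some
  haveI fin1 : FiniteDimensional ℂ ↥(LinearMap.ker (rres P R)) :=
    hV.some.symm.finiteDimensional
  haveI fin2 : FiniteDimensional ℂ (↥Fs ⧸ LinearMap.range (rres P R)) :=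
    ecoker.symm.finiteDimensional
  refine ⟨⟨ecoker⟩, ?_⟩
  rw [Rind, hV.some.finrank_eq, ecoker.finrank_eq]
end
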